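/- arXiv:2208.02631 — 2 statements merged into one kernel-verified Lean document; each statement's English description precedes it below -/
import Mathlib

section
/- There exists a unit vector x in a J-invariant subspace X with xᵀJx = 0 if and only if the matrix AᵀJA (A an orthonormal basis matrix of X) has both 1 and −1 as eigenvalues, i.e., is neither positive definite nor negative definite. -/
/-!
Write `M = AᵀJA`. Since `X = range A` is `J`-invariant and `AᵀA = 1`, we get `JA = AM`, so `M` is a
symmetric involution, and `x = Av` identifies `X` isometrically with `ℝ^ℓ`, carrying `xᵀJx` to
`vᵀMv`. For a symmetric involution `M`, an isotropic unit vector `v` yields the eigenvectors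
`v ± Mv` for `±1` (nonzero because their inner product with `v` is `1`); conversely unit
eigenvectors `u`, `w` for `1`, `-1` are orthogonal, so `u + w` is isotropic.
-/

open Matrix

namespace Matrix

section Compression

variable {α m n : Type*} [CommSemiring α] [Fintype m]

theorem isSymm_transpose_mul_mul (A : Matrix m n α) {B : Matrix m m α} (hB : B.IsSymm) :
    (Aᵀ * B * A).IsSymm := by
  rw [IsSymm, transpose_mul, transpose_mul, transpose_transpose, hB.eq, Matrix.mul_assoc]

variable [Fintype n]

theorem IsSymm.mulVec_dotProduct {M : Matrix n n α} (hM : M.IsSymm) (u w : n → α) :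
    M *ᵥ u ⬝ᵥ w = u ⬝ᵥ M *ᵥ w := by
  conv_rhs => rw [← hM.eq]
  rw [dotProduct_transpose_mulVec, dotProduct_comm]

theorem mulVec_dotProduct_mulVec (A B : Matrix m n α) (u w : n → α) :
    A *ᵥ u ⬝ᵥ B *ᵥ w = u ⬝ᵥ (Aᵀ * B) *ᵥ w := by
  rw [← mulVec_mulVec, dotProduct_transpose_mulVec, dotProduct_comm]

variable [DecidableEq n] {A : Matrix m n α}

theorem exists_unit_isotropic_mem_range_iff (hA : Aᵀ * A = 1) (B : Matrix m m α) :
    (∃ x ∈ LinearMap.range A.mulVecLin, x ⬝ᵥ x = 1 ∧ x ⬝ᵥ B *ᵥ x = 0) ↔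
      ∃ v, v ⬝ᵥ v = 1 ∧ v ⬝ᵥ (Aᵀ * B * A) *ᵥ v = 0 := by
  simp only [LinearMap.mem_range, mulVecLin_apply, exists_exists_eq_and, mulVec_mulVec,
    mulVec_dotProduct_mulVec, hA, one_mulVec, Matrix.mul_assoc]

theorem mul_eq_mul_transpose_mul_mul (hA : Aᵀ * A = 1) {B : Matrix m m α}
    (hB : ∀ v, ∃ w, B *ᵥ A *ᵥ v = A *ᵥ w) : B * A = A * (Aᵀ * B * A) := by
  refine ext_iff_mulVec.mpr fun v => ?_
  obtain ⟨w, hw⟩ := hB v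
  rw [← mulVec_mulVec, hw, ← mulVec_mulVec, ← mulVec_mulVec, ← mulVec_mulVec, hw,
    mulVec_mulVec _ Aᵀ, hA, one_mulVec]

theorem transpose_mul_mul_mul_self_eq_one [DecidableEq m] (hA : Aᵀ * A = 1) {B : Matrix m m α}
    (hB : ∀ v, ∃ w, B *ᵥ A *ᵥ v = A *ᵥ w) (hBB : B * B = 1) :
    Aᵀ * B * A * (Aᵀ * B * A) = 1 := by
  rw [Matrix.mul_assoc (Aᵀ * B), ← mul_eq_mul_transpose_mul_mul hA hB, ← Matrix.mul_assoc,
    Matrix.mul_assoc Aᵀ, hBB, Matrix.mul_one, hA]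

end Compression

section Isotropic

variable {n : Type*} [Fintype n]

theorem exists_smul_dotProduct_self_eq_one {v : n → ℝ} (hv : v ≠ 0) :
    ∃ c : ℝ, c • v ⬝ᵥ c • v = 1 := by
  have hpos : 0 < v ⬝ᵥ v :=
    lt_of_le_of_ne (Finset.sum_nonneg fun i _ => mul_self_nonneg (v i))
      (Ne.symm (dotProduct_self_eq_zero.not.mpr hv))
  refine ⟨(√(v ⬝ᵥ v))⁻¹, ?_⟩
  rw [smul_dotProduct, dotProduct_smul, smul_eq_mul, smul_eq_mul, ← mul_assoc, ← mul_inv,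
    Real.mul_self_sqrt hpos.le, inv_mul_cancel₀ hpos.ne']

theorem exists_unit_eigenvector {M : Matrix n n ℝ} {μ : ℝ} {v : n → ℝ} (hv : v ≠ 0)
    (hMv : M *ᵥ v = μ • v) : ∃ u, u ⬝ᵥ u = 1 ∧ M *ᵥ u = μ • u := by
  obtain ⟨c, hc⟩ := exists_smul_dotProduct_self_eq_one hv
  exact ⟨c • v, hc, by rw [mulVec_smul, hMv, smul_comm]⟩

theorem exists_unit_isotropic {M : Matrix n n ℝ} {v : n → ℝ} (hv : v ≠ 0)
    (hvMv : v ⬝ᵥ M *ᵥ v = 0) : ∃ x, x ⬝ᵥ x = 1 ∧ x ⬝ᵥ M *ᵥ x = 0 := by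
  obtain ⟨c, hc⟩ := exists_smul_dotProduct_self_eq_one hv
  exact ⟨c • v, hc, by simp [mulVec_smul, hvMv]⟩

theorem exists_unit_isotropic_iff [DecidableEq n] {M : Matrix n n ℝ} (hsymm : M.IsSymm)
    (hinv : M * M = 1) :
    (∃ x, x ⬝ᵥ x = 1 ∧ x ⬝ᵥ M *ᵥ x = 0) ↔
      (∃ v ≠ 0, M *ᵥ v = (1 : ℝ) • v) ∧ (∃ v ≠ 0, M *ᵥ v = (-1 : ℝ) • v) := by
  have hMM (v : n → ℝ) : M *ᵥ M *ᵥ v = v := by rw [mulVec_mulVec, hinv, one_mulVec]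
  constructor
  · rintro ⟨x, hxx, hxMx⟩
    have hMxx : M *ᵥ x ⬝ᵥ x = 0 := by rw [hsymm.mulVec_dotProduct, hxMx]
    refine ⟨⟨x + M *ᵥ x, fun h => ?_, ?_⟩, ⟨x - M *ᵥ x, fun h => ?_, ?_⟩⟩
    · simpa [add_dotProduct, hxx, hMxx] using congrArg (· ⬝ᵥ x) h
    · rw [mulVec_add, hMM, one_smul, add_comm]
    · simpa [sub_dotProduct, hxx, hMxx] using congrArg (· ⬝ᵥ x) h
    · rw [mulVec_sub, hMM, neg_one_smul, neg_sub]
  · rintro ⟨⟨u₀, hu₀, hMu₀⟩, ⟨w₀, hw₀, hMw₀⟩⟩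
    obtain ⟨u, huu, hMu⟩ := exists_unit_eigenvector hu₀ hMu₀
    obtain ⟨w, hww, hMw⟩ := exists_unit_eigenvector hw₀ hMw₀
    rw [one_smul] at hMu
    rw [neg_one_smul] at hMw
    have huw : u ⬝ᵥ w = 0 := by
      have : u ⬝ᵥ w = -(u ⬝ᵥ w) := by
        rw [← dotProduct_neg, ← hMw, ← hsymm.mulVec_dotProduct, hMu]
      linarith
    have hwu : w ⬝ᵥ u = 0 := by rw [dotProduct_comm, huw]
    refine exists_unit_isotropic (v := u + w) (fun h => ?_) ?_
    · simpa [add_dotProduct, huu, hwu] using congrArg (· ⬝ᵥ u) h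
    · rw [mulVec_add, hMu, hMw]
      simp only [add_dotProduct, dotProduct_add, dotProduct_neg, huu, hww, huw, hwu]
      ring

end Isotropic

end Matrix

theorem stmt_2_general (N ℓ : ℕ)
    (J : Matrix (Fin N) (Fin N) ℝ)
    (d : Fin N → ℝ) (hd : ∀ i, d i = 1 ∨ d i = -1)
    (hJ : J = Matrix.diagonal d)
    (X : Submodule ℝ (Fin N → ℝ))
    (hJX : Submodule.map (Matrix.mulVecLin J) X = X)
    (A : Matrix (Fin N) (Fin ℓ) ℝ)
    (hortho : Aᵀ * A = 1)
    (hspan : X = Submodule.span ℝ (Set.range (fun j => Aᵀ j))) :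
    (∃ x : Fin N → ℝ, x ∈ X ∧ x ⬝ᵥ x = 1 ∧ x ⬝ᵥ J.mulVec x = 0) ↔
      ((∃ v : Fin ℓ → ℝ, v ≠ 0 ∧ (Aᵀ * J * A).mulVec v = (1 : ℝ) • v) ∧
       (∃ v : Fin ℓ → ℝ, v ≠ 0 ∧ (Aᵀ * J * A).mulVec v = (-1 : ℝ) • v)) := by
  have hX : X = LinearMap.range A.mulVecLin := hspan.trans A.range_mulVecLin.symm
  have hJA (v : Fin ℓ → ℝ) : ∃ w, J *ᵥ A *ᵥ v = A *ᵥ w := by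
    obtain ⟨w, hw⟩ : J *ᵥ A *ᵥ v ∈ LinearMap.range A.mulVecLin :=
      hX ▸ hJX ▸ Submodule.mem_map_of_mem (hX ▸ ⟨v, rfl⟩)
    exact ⟨w, hw.symm⟩
  have hJJ : J * J = 1 := by
    rw [hJ, diagonal_mul_diagonal, ← diagonal_one]
    congr with i
    rcases hd i with h | h <;> simp [h]
  rw [hX, exists_unit_isotropic_mem_range_iff hortho]
  exact exists_unit_isotropic_iff (isSymm_transpose_mul_mul A (hJ ▸ isSymm_diagonal d))
    (transpose_mul_mul_mul_self_eq_one hortho hJA hJJ)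

/-- there is a unit vector `x` in the `J`-invariant subspace `X`
with `xᵀJx = 0` iff `AᵀJA` has both `1` and `-1` as eigenvalues. -/
theorem stmt_2 (N ℓ : ℕ) (hℓ : 0 < ℓ)
    (J : Matrix (Fin N) (Fin N) ℝ)
    (d : Fin N → ℝ) (hd : ∀ i, d i = 1 ∨ d i = -1)
    (hJ : J = Matrix.diagonal d)
    (X : Submodule ℝ (Fin N → ℝ))
    (hJX : Submodule.map (Matrix.mulVecLin J) X = X)
    (A : Matrix (Fin N) (Fin ℓ) ℝ)
    (hortho : Aᵀ * A = 1)
    (hspan : X = Submodule.span ℝ (Set.range (fun j => Aᵀ j))) :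
    (∃ x : Fin N → ℝ, x ∈ X ∧ x ⬝ᵥ x = 1 ∧ x ⬝ᵥ J.mulVec x = 0) ↔
      ((∃ v : Fin ℓ → ℝ, v ≠ 0 ∧ (Aᵀ * J * A).mulVec v = (1 : ℝ) • v) ∧
       (∃ v : Fin ℓ → ℝ, v ≠ 0 ∧ (Aᵀ * J * A).mulVec v = (-1 : ℝ) • v)) :=
  stmt_2_general N ℓ J d hd hJ X hJX A hortho hspan
end

section
/- Sufficient conditions for perfect reconstruction: if JU = UΦ with Φ a symmetric permutation matrix and the filter vectors satisfy g₀⊙h₀ + g₁⊙h₁ = 2·𝟏 and (Φg₀)⊙h₀ − (Φg₁)⊙h₁ = 0, then F_{g₀}(I+J)F_{h₀} + F_{g₁}(I−J)F_{h₁} = 2I, where F_h = U diag(h) Uᵀ. -/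
open Matrix

/-- sufficient conditions for perfect reconstruction of the
two-channel filterbank: if `JU = UΦ` and the filter vectors satisfy
`g₀⊙h₀ + g₁⊙h₁ = 2·𝟏` and `(Φg₀)⊙h₀ − (Φg₁)⊙h₁ = 0`, then
`F_{g₀}(I+J)F_{h₀} + F_{g₁}(I−J)F_{h₁} = 2I`. -/
theorem stmt_8 (N : ℕ) (U J Φ : Matrix (Fin N) (Fin N) ℝ)
    (hU : Uᵀ * U = 1)
    (d : Fin N → ℝ) (hd : ∀ i, d i = 1 ∨ d i = -1) (hJ : J = Matrix.diagonal d)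
    (hperm : ∃ σ : Equiv.Perm (Fin N), Φ = Matrix.of (fun i j => if i = σ j then (1 : ℝ) else 0))
    (hΦsymm : Φᵀ = Φ)
    (hfold : J * U = U * Φ)
    (h₀ h₁ g₀ g₁ : Fin N → ℝ)
    (F : (Fin N → ℝ) → Matrix (Fin N) (Fin N) ℝ)
    (hF : ∀ h, F h = U * Matrix.diagonal h * Uᵀ)
    (hcond1 : (fun i => g₀ i * h₀ i + g₁ i * h₁ i) = fun _ => (2 : ℝ))
    (hcond2 : (fun i => Φ.mulVec g₀ i * h₀ i - Φ.mulVec g₁ i * h₁ i) = fun _ => (0 : ℝ)) :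
    F g₀ * (1 + J) * F h₀ + F g₁ * (1 - J) * F h₁ = (2 : ℝ) • (1 : Matrix (Fin N) (Fin N) ℝ) := by
  obtain ⟨σ, hΦdef⟩ := hperm
  have hUU : U * Uᵀ = 1 := mul_eq_one_comm.mp hU
  -- σ is an involution
  have hinv : ∀ j, σ (σ j) = j := by
    intro j
    have := congrFun (congrFun hΦsymm (σ j)) j
    rw [Matrix.transpose_apply, hΦdef] at this
    simp only [Matrix.of_apply, if_pos rfl] at this
    by_contra hne
    rw [if_neg (fun h => hne h.symm)] at this
    simp at this
  -- mulVec formula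
  have hmul : ∀ (g : Fin N → ℝ) (i : Fin N), Φ.mulVec g i = g (σ i) := by
    intro g i
    rw [hΦdef]
    simp only [Matrix.mulVec, dotProduct, Matrix.of_apply, ite_mul, one_mul, zero_mul]
    rw [Finset.sum_eq_single (σ i)]
    · rw [hinv i, if_pos rfl]
    · intro b _ hb
      rw [if_neg (fun h => hb (by rw [h, hinv]))]
    · intro h; exact absurd (Finset.mem_univ _) h
  -- the pointwise conditions
  have hc1 : ∀ i, g₀ i * h₀ i + g₁ i * h₁ i = 2 := fun i => congrFun hcond1 i
  have hc2 : ∀ i, g₀ (σ i) * h₀ i - g₁ (σ i) * h₁ i = 0 := by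
    intro i
    have := congrFun hcond2 i
    rwa [hmul, hmul] at this
  -- the middle matrix is 2•1
  have hmid : Matrix.diagonal g₀ * (1 + Φ) * Matrix.diagonal h₀ +
      Matrix.diagonal g₁ * (1 - Φ) * Matrix.diagonal h₁ =
      (2 : ℝ) • (1 : Matrix (Fin N) (Fin N) ℝ) := by
    ext i j
    simp only [Matrix.add_apply, Matrix.mul_diagonal, Matrix.diagonal_mul,
      Matrix.sub_apply, Matrix.one_apply, hΦdef, Matrix.of_apply,
      Matrix.smul_apply, smul_eq_mul]
    by_cases hij : i = j
    · subst hij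
      by_cases hfix : i = σ i
      · rw [if_pos rfl, if_pos hfix]
        have h2 := hc2 i
        rw [← hfix] at h2
        nlinarith [hc1 i]
      · rw [if_pos rfl, if_neg hfix]
        nlinarith [hc1 i]
    · rw [if_neg hij]
      by_cases hs : i = σ j
      · rw [if_pos hs]
        have h2 := hc2 j
        rw [← hs] at h2
        nlinarith
      · rw [if_neg hs]; ring
  -- folding lemmas
  have m0 : Uᵀ * ((1 + J) * U) = 1 + Φ := by
    rw [add_mul, one_mul, hfold, mul_add, ← Matrix.mul_assoc, hU, one_mul]
  have m1 : Uᵀ * ((1 - J) * U) = 1 - Φ := by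
    rw [sub_mul, one_mul, hfold, mul_sub, ← Matrix.mul_assoc, hU, one_mul]
  have e0 : F g₀ * (1 + J) * F h₀ =
      U * (Matrix.diagonal g₀ * (1 + Φ) * Matrix.diagonal h₀) * Uᵀ := by
    rw [hF, hF]
    calc U * Matrix.diagonal g₀ * Uᵀ * (1 + J) * (U * Matrix.diagonal h₀ * Uᵀ)
        = U * (Matrix.diagonal g₀ * ((Uᵀ * ((1 + J) * U)) * (Matrix.diagonal h₀ * Uᵀ))) := by
          simp only [Matrix.mul_assoc]
      _ = U * (Matrix.diagonal g₀ * (1 + Φ) * Matrix.diagonal h₀) * Uᵀ := by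
          rw [m0]; simp only [Matrix.mul_assoc]
  have e1 : F g₁ * (1 - J) * F h₁ =
      U * (Matrix.diagonal g₁ * (1 - Φ) * Matrix.diagonal h₁) * Uᵀ := by
    rw [hF, hF]
    calc U * Matrix.diagonal g₁ * Uᵀ * (1 - J) * (U * Matrix.diagonal h₁ * Uᵀ)
        = U * (Matrix.diagonal g₁ * ((Uᵀ * ((1 - J) * U)) * (Matrix.diagonal h₁ * Uᵀ))) := by
          simp only [Matrix.mul_assoc]
      _ = U * (Matrix.diagonal g₁ * (1 - Φ) * Matrix.diagonal h₁) * Uᵀ := by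
          rw [m1]; simp only [Matrix.mul_assoc]
  rw [e0, e1, ← Matrix.add_mul, ← Matrix.mul_add, hmid]
  rw [Matrix.mul_smul, Matrix.smul_mul, mul_one, hUU]
end
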